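/- arXiv:1903.04575 — 5 statements merged into one kernel-verified Lean document; each statement's English description precedes it below -/
import Mathlib

section
/- Let G be a connected graph with v1 and v2 non-adjacent twin vertices (same neighborhoods, hence same distances to every other vertex, with d(v1,v2) = 2) sharing transmission k. Then (k+2)/k is an eigenvalue of the normalized distance Laplacian of G, with eigenvector (1, -1, 0, ..., 0) (supported on v1, v2). -/
/-! The vector `e_{v₁} - e_{v₂}` picks out the difference of the columns `v₁` and `v₂`.
Twins have equal distances and equal transmissions, so these columns agree off `{v₁, v₂}`,
and on `{v₁, v₂}` the difference is `±(1 + d(v₁, v₂)/√(k·k)) = ±(1 + 2/k)`. -/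

open Matrix

namespace Matrix

variable {ι R : Type*} [Fintype ι] [DecidableEq ι] [Ring R]

theorem mulVec_single_one_sub_single_one (M : Matrix ι ι R) (a b : ι) :
    M *ᵥ (Pi.single a 1 - Pi.single b 1) = fun i => M i a - M i b := by
  rw [mulVec_sub, mulVec_single_one, mulVec_single_one]
  rfl

theorem mulVec_single_one_sub_single_one_eq_smul (M : Matrix ι ι R) {a b : ι} (hab : a ≠ b)
    {c : R} (hcol : ∀ i, i ≠ a → i ≠ b → M i a = M i b)
    (ha : M a a - M a b = c) (hb : M b b - M b a = c) :
    M *ᵥ (Pi.single a 1 - Pi.single b 1) = c • (Pi.single a 1 - Pi.single b 1) := by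
  rw [mulVec_single_one_sub_single_one]
  funext i
  by_cases hia : i = a
  · subst hia
    simp [hab, ha]
  by_cases hib : i = b
  · subst hib
    simp [hia, ← hb]
  simp [hia, hib, hcol i hia hib]

end Matrix

theorem stmt6_general {n : ℕ} (G : SimpleGraph (Fin n))
    (v1 v2 : Fin n) (hne : v1 ≠ v2)
    (htwin : ∀ u, u ≠ v1 → u ≠ v2 → G.dist v1 u = G.dist v2 u)
    (hd12 : G.dist v1 v2 = 2)
    (k : ℝ) (hk : 0 < k)
    (t : Fin n → ℝ)
    (ht1 : t v1 = k) (ht2 : t v2 = k)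
    (M : Matrix (Fin n) (Fin n) ℝ)
    (hM : M = Matrix.of fun i j =>
      if i = j then (1 : ℝ) else -(G.dist i j : ℝ) / Real.sqrt (t i * t j))
    (x : Fin n → ℝ)
    (hx : x = fun u => if u = v1 then (1 : ℝ) else if u = v2 then -1 else 0) :
    M *ᵥ x = ((k + 2) / k) • x := by
  have hx' : x = Pi.single v1 1 - Pi.single v2 1 := by
    funext u
    rcases eq_or_ne u v1 with rfl | h1
    · simp [hx, hne]
    rcases eq_or_ne u v2 with rfl | h2
    · simp [hx, h1]
    · simp [hx, h1, h2]
  have hsqrt : Real.sqrt (k * k) = k := Real.sqrt_mul_self hk.le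
  have hdiag : ∀ a b, a ≠ b → G.dist a b = 2 → t a = k → t b = k →
      M a a - M a b = (k + 2) / k := by
    intro a b hab hdab hta htb
    simp only [hM, of_apply, if_neg hab, hdab, hta, htb, hsqrt]
    field_simp
    push_cast
    ring
  subst hx'
  refine mulVec_single_one_sub_single_one_eq_smul M hne (fun i hi1 hi2 => ?_)
    (hdiag v1 v2 hne hd12 ht1 ht2) (hdiag v2 v1 hne.symm (G.dist_comm.trans hd12) ht2 ht1)
  simp only [hM, of_apply, if_neg hi1, if_neg hi2, G.dist_comm (u := i), htwin i hi1 hi2, ht1, ht2]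

theorem stmt6 {n : ℕ} (G : SimpleGraph (Fin n)) (hG : G.Connected)
    (v1 v2 : Fin n) (hne : v1 ≠ v2) (hnadj : ¬ G.Adj v1 v2)
    (htwin : ∀ u, u ≠ v1 → u ≠ v2 → G.dist v1 u = G.dist v2 u)
    (hd12 : G.dist v1 v2 = 2)
    (k : ℝ) (hk : 0 < k)
    (t : Fin n → ℝ) (ht : t = fun i => ∑ j, (G.dist i j : ℝ))
    (ht1 : t v1 = k) (ht2 : t v2 = k)
    (M : Matrix (Fin n) (Fin n) ℝ)
    (hM : M = Matrix.of fun i j =>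
      if i = j then (1 : ℝ) else -(G.dist i j : ℝ) / Real.sqrt (t i * t j))
    (x : Fin n → ℝ)
    (hx : x = fun u => if u = v1 then (1 : ℝ) else if u = v2 then -1 else 0) :
    M *ᵥ x = ((k + 2) / k) • x :=
  stmt6_general G v1 v2 hne htwin hd12 k hk t ht1 ht2 M hM x hx
end

section
/- The normalized distance Laplacian spectrum of the complete bipartite graph K_{m,n} is {0, (2n+m)/(2n+m-2) with multiplicity n-1, (n+2m)/(n+2m-2) with multiplicity m-1, 2(n²+m²+mn-n-m)/((2n+m-2)(n+2m-2)) with multiplicity 1}. -/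
/-!
Off the diagonal, the normalized distance Laplacian of `K_{n,m}` is constant on each of the four
blocks, so it is a diagonal matrix (entries `p` on one part, `q` on the other) plus the rank-two
matrix `U S Uᵀ`, where the columns of `U` are the indicators of the two parts. By the matrix
determinant lemma, `det (t - M)` is then `(t - p) ^ n (t - q) ^ m` times a `2 × 2` determinant,
which turns out to be `det (t - Q) / ((t - p) (t - q))` for the quotient matrix `Q` of the
partition. For `K_{n,m}` the quotient matrix is singular (`T^{1/2} 𝟙` is in the kernel of the
Laplacian), so its eigenvalues are `0` and its trace.
-/

open Matrix Polynomial

namespace Matrix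

variable {K : Type*} [Field K] {α β : Type*} [DecidableEq α] [DecidableEq β]

variable (α β) in
def twoBlockMatrix (p q a b c d : K) : Matrix (α ⊕ β) (α ⊕ β) K :=
  fromBlocks (p • 1 + of fun _ _ => a) (of fun _ _ => c) (of fun _ _ => d)
    (q • 1 + of fun _ _ => b)

variable (K α β) in
def blockIndicator : Matrix (α ⊕ β) (Fin 2) K :=
  of (Sum.elim (fun _ => ![1, 0]) (fun _ => ![0, 1]))

lemma twoBlockMatrix_eq_diagonal_add (p q a b c d : K) :
    twoBlockMatrix α β p q a b c d =
      diagonal (Sum.elim (fun _ => p) (fun _ => q)) +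
        blockIndicator K α β * !![a, c; d, b] * (blockIndicator K α β)ᵀ := by
  ext (i | i) (j | j) <;>
    simp [twoBlockMatrix, blockIndicator, Matrix.mul_apply, Fin.sum_univ_two, one_apply,
      diagonal_apply]

variable [Fintype α] [Fintype β]

lemma blockIndicator_transpose_mul_diagonal_mul (u v : K) :
    (blockIndicator K α β)ᵀ *
        (diagonal (Sum.elim (fun _ => u) (fun _ => v)) : Matrix (α ⊕ β) (α ⊕ β) K) *
        blockIndicator K α β =
      (diagonal ![Fintype.card α * u, Fintype.card β * v] : Matrix (Fin 2) (Fin 2) K) := by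
  ext k l
  fin_cases k <;> fin_cases l <;> simp [blockIndicator, Matrix.mul_apply, Fintype.sum_sum_type, diagonal_apply]

lemma det_scalar_sub_twoBlockMatrix {p q t : K} (hp : t ≠ p) (hq : t ≠ q) (a b c d : K) :
    (scalar (α ⊕ β) t - twoBlockMatrix α β p q a b c d).det =
      (t - p) ^ Fintype.card α * (t - q) ^ Fintype.card β *
        (1 - !![a, c; d, b] *
          diagonal ![Fintype.card α * (t - p)⁻¹, Fintype.card β * (t - q)⁻¹]).det := by
  set U := blockIndicator K α β
  set D : Matrix (α ⊕ β) (α ⊕ β) K := diagonal (Sum.elim (fun _ => t - p) (fun _ => t - q))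
  have hsplit : scalar (α ⊕ β) t - twoBlockMatrix α β p q a b c d =
      D + -U * (!![a, c; d, b] * Uᵀ) := by
    rw [twoBlockMatrix_eq_diagonal_add, scalar_apply, sub_add_eq_sub_sub, diagonal_sub,
      Matrix.neg_mul, Matrix.mul_assoc, sub_eq_add_neg]
    congr 2
    ext (i | i) <;> rfl
  have hdetD : D.det = (t - p) ^ Fintype.card α * (t - q) ^ Fintype.card β := by
    simp [D, det_diagonal, Fintype.prod_sum_type]
  have hDinv : D⁻¹ = diagonal (Sum.elim (fun _ => (t - p)⁻¹) (fun _ => (t - q)⁻¹)) := by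
    refine inv_eq_right_inv ?_
    rw [diagonal_mul_diagonal, ← diagonal_one]
    congr 1
    ext (i | i) <;> simp [sub_ne_zero.mpr hp, sub_ne_zero.mpr hq]
  have hunit : IsUnit D.det := by
    rw [hdetD]
    exact IsUnit.mk0 _ (by simp [sub_ne_zero.mpr hp, sub_ne_zero.mpr hq])
  rw [hsplit, det_add_mul _ _ hunit, hdetD, hDinv, Matrix.mul_neg, Matrix.mul_assoc,
    Matrix.mul_assoc, ← Matrix.mul_assoc Uᵀ, blockIndicator_transpose_mul_diagonal_mul,
    ← sub_eq_add_neg]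

theorem charpoly_twoBlockMatrix [Infinite K] [Nonempty α] [Nonempty β] (p q a b c d : K) :
    (twoBlockMatrix α β p q a b c d).charpoly =
      (X - C p) ^ (Fintype.card α - 1) * (X - C q) ^ (Fintype.card β - 1) *
        !![p + Fintype.card α * a, Fintype.card β * c;
          Fintype.card α * d, q + Fintype.card β * b].charpoly := by
  -- it suffices to compare evaluations at the infinitely many `t ∉ {p, q}`
  refine eq_of_infinite_eval_eq _ _ (((Set.finite_singleton q).insert p).infinite_compl.mono ?_)
  intro t ht
  simp only [Set.mem_compl_iff, Set.mem_insert_iff, Set.mem_singleton_iff, not_or] at ht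
  have hp := sub_ne_zero.mpr ht.1
  have hq := sub_ne_zero.mpr ht.2
  obtain ⟨k, hk⟩ := Nat.exists_eq_succ_of_ne_zero (Fintype.card_ne_zero (α := α))
  obtain ⟨l, hl⟩ := Nat.exists_eq_succ_of_ne_zero (Fintype.card_ne_zero (α := β))
  simp only [Set.mem_ofPred_eq, eval_mul, eval_pow, eval_sub, eval_X, eval_C, eval_charpoly,
    det_scalar_sub_twoBlockMatrix ht.1 ht.2, det_fin_two, sub_apply, mul_diagonal]
  rw [hk, hl]
  simp [scalar_apply]
  field_simp
  ring

lemma charpoly_fin_two_of_det_eq_zero (N : Matrix (Fin 2) (Fin 2) K) (h : N.det = 0) :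
    N.charpoly = X * (X - C N.trace) := by
  rw [charpoly_fin_two, h, map_zero, add_zero]
  ring

end Matrix

theorem stmt8 {n m : ℕ} (hn : 2 ≤ n) (hm : 2 ≤ m)
    (M : Matrix (Fin n ⊕ Fin m) (Fin n ⊕ Fin m) ℝ)
    (hM : M = Matrix.of fun p q =>
      match p, q with
      | Sum.inl i, Sum.inl j =>
          if i = j then (1 : ℝ) else -2 / (2 * (n : ℝ) + m - 2)
      | Sum.inl _, Sum.inr _ =>
          -1 / Real.sqrt ((2 * (n : ℝ) + m - 2) * ((n : ℝ) + 2 * m - 2))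
      | Sum.inr _, Sum.inl _ =>
          -1 / Real.sqrt ((2 * (n : ℝ) + m - 2) * ((n : ℝ) + 2 * m - 2))
      | Sum.inr i, Sum.inr j =>
          if i = j then (1 : ℝ) else -2 / ((n : ℝ) + 2 * m - 2)) :
    M.charpoly = X
      * (X - C ((2 * (n : ℝ) + m) / (2 * (n : ℝ) + m - 2))) ^ (n - 1)
      * (X - C (((n : ℝ) + 2 * m) / ((n : ℝ) + 2 * m - 2))) ^ (m - 1)
      * (X - C (2 * ((n : ℝ) ^ 2 + (m : ℝ) ^ 2 + m * n - n - m) /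
          ((2 * (n : ℝ) + m - 2) * ((n : ℝ) + 2 * m - 2)))) := by
  have : NeZero n := ⟨by omega⟩
  have : NeZero m := ⟨by omega⟩
  have hn' : (2 : ℝ) ≤ n := mod_cast hn
  have hm' : (2 : ℝ) ≤ m := mod_cast hm
  set A : ℝ := 2 * (n : ℝ) + m - 2
  set B : ℝ := (n : ℝ) + 2 * m - 2
  have hA : 0 < A := by linarith
  have hB : 0 < B := by linarith
  set c : ℝ := -1 / √(A * B)
  have hc : c ^ 2 = 1 / (A * B) := by
    rw [div_pow, Real.sq_sqrt (by positivity)]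
    norm_num
  have hM' : M = twoBlockMatrix (Fin n) (Fin m) (1 + 2 / A) (1 + 2 / B) (-2 / A) (-2 / B) c c := by
    rw [hM]
    ext (i | i) (j | j) <;> simp [twoBlockMatrix, one_apply, c, neg_div] <;> split_ifs <;> ring
  have hdet : (1 + 2 / A + n * (-2 / A)) * (1 + 2 / B + m * (-2 / B)) - m * c * (n * c) = 0 := by
    rw [show m * c * (n * c) = m * n * c ^ 2 by ring, hc]
    field_simp
    ring
  rw [hM', charpoly_twoBlockMatrix, Fintype.card_fin, Fintype.card_fin,
    charpoly_fin_two_of_det_eq_zero _ (by rwa [det_fin_two_of]), trace_fin_two_of,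
    show 1 + 2 / A + n * (-2 / A) + (1 + 2 / B + m * (-2 / B)) =
      2 * ((n : ℝ) ^ 2 + (m : ℝ) ^ 2 + m * n - n - m) / (A * B) by field_simp; ring,
    show 1 + 2 / A = (2 * (n : ℝ) + m) / A by field_simp; ring,
    show 1 + 2 / B = ((n : ℝ) + 2 * m) / B by field_simp; ring]
  ring
end

section
/- The normalized distance Laplacian spectrum of K_n minus one edge is {0, (n²-n+2)/(n(n-1)), n/(n-1) with multiplicity n-3, (n+2)/n}. -/
/-!
Off the diagonal, the matrix is constant on the blocks of the partition
`{v₁, v₂} ∪ {v₃, …, vₙ}`: it is a diagonal matrix plus `Q.submatrix f f` for the class map `f`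
and a `2 × 2` matrix `Q`, a perturbation of rank at most two. By the Weinstein–Aronszajn identity
`det (1 - A * B) = det (1 - B * A)`, the characteristic polynomial is then, up to the powers
`(X - λ) ^ (block size - 1)` contributed by the diagonal, that of the `2 × 2` quotient matrix of
the partition, whose eigenvalues are `0` and `(n² - n + 2) / (n (n - 1))`.
-/

open Matrix Polynomial Finset

theorem Fin.card_filter_not_val_lt {n m : ℕ} : #{i : Fin n | ¬ (i : ℕ) < m} = n - m := by
  have h := card_filter_add_card_filter_not (s := univ) fun i : Fin n => (i : ℕ) < m
  rw [Fin.card_filter_val_lt, card_univ, Fintype.card_fin] at h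
  omega

namespace Matrix

variable {ι κ : Type*}

def fiberIndicator (R : Type*) [Zero R] [One R] [DecidableEq κ] (f : ι → κ) : Matrix ι κ R :=
  Matrix.of fun i k => if f i = k then 1 else 0

section Semiring

variable {R : Type*} [CommSemiring R] [DecidableEq κ] (f : ι → κ)

theorem fiberIndicator_mul_mul_transpose [Fintype κ] (Q : Matrix κ κ R) :
    fiberIndicator R f * Q * (fiberIndicator R f)ᵀ = Q.submatrix f f := by
  ext i j
  simp [fiberIndicator, mul_apply]

theorem transpose_fiberIndicator_mul_diagonal_mul [Fintype ι] [DecidableEq ι] (d : κ → R) :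
    (fiberIndicator R f)ᵀ * diagonal (d ∘ f) * fiberIndicator R f =
      diagonal fun k => #{i | f i = k} * d k := by
  ext k l
  rw [mul_apply]
  simp only [mul_diagonal, transpose_apply, fiberIndicator, of_apply, diagonal_apply,
    Function.comp_apply, ite_mul, one_mul, zero_mul]
  rcases eq_or_ne k l with rfl | hkl
  · rw [if_pos rfl, ← nsmul_eq_mul, ← sum_const, sum_filter]
    exact sum_congr rfl fun j _ => by split_ifs with h <;> simp [h]
  · rw [if_neg hkl]
    exact sum_eq_zero fun j _ => by grind

end Semiring

section Field

variable {F : Type*} [Field F] [Fintype ι] [DecidableEq ι]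

theorem det_diagonal_sub {d : ι → F} (hd : ∀ i, d i ≠ 0) (A : Matrix ι ι F) :
    (diagonal d - A).det = (∏ i, d i) * (1 - diagonal d⁻¹ * A).det := by
  have hd' : diagonal d * diagonal d⁻¹ = 1 := by
    rw [diagonal_mul_diagonal, ← diagonal_one]
    exact congrArg diagonal (funext fun i => mul_inv_cancel₀ (hd i))
  rw [← det_diagonal, ← det_mul, Matrix.mul_sub, Matrix.mul_one, ← Matrix.mul_assoc, hd',
    Matrix.one_mul]

theorem det_diagonal_comp_sub_submatrix [Fintype κ] [DecidableEq κ] {d : κ → F}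
    (hd : ∀ k, d k ≠ 0) (Q : Matrix κ κ F) (f : ι → κ) :
    (diagonal (d ∘ f) - Q.submatrix f f).det * ∏ k, d k =
      (∏ i, d (f i)) * (diagonal d - diagonal (fun k => (#{i | f i = k} : F)) * Q).det := by
  rw [← fiberIndicator_mul_mul_transpose, det_diagonal_sub (d := d ∘ f) (fun i => hd (f i)),
    det_diagonal_sub hd, ← Matrix.mul_assoc, ← Matrix.mul_assoc, ← Matrix.mul_assoc,
    det_one_sub_mul_comm, ← Matrix.mul_assoc, ← Matrix.mul_assoc, diagonal_mul_diagonal,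
    show (d ∘ f)⁻¹ = d⁻¹ ∘ f from rfl, transpose_fiberIndicator_mul_diagonal_mul]
  simp_rw [Function.comp_apply, mul_comm (d⁻¹ _)]
  ring

theorem charpoly_diagonal_comp_add_submatrix_mul_prod [Fintype κ] [DecidableEq κ] (e : κ → F)
    (Q : Matrix κ κ F) (f : ι → κ) :
    (diagonal (e ∘ f) + Q.submatrix f f).charpoly * ∏ k, (X - C (e k)) =
      (∏ i, (X - C (e (f i)))) *
        (diagonal (fun k => X - C (e k)) -
          diagonal (fun k => (#{i | f i = k} : F[X])) * Q.map C).det := by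
  have hchar : charmatrix (diagonal (e ∘ f) + Q.submatrix f f) =
      diagonal ((fun k => X - C (e k)) ∘ f) - (Q.map C).submatrix f f := by
    ext i j
    rcases eq_or_ne i j with rfl | hij
    · simp [sub_sub]
    · simp [hij]
  -- `det_diagonal_comp_sub_submatrix` needs the diagonal entries `X - C (e k)` to be invertible.
  set φ := algebraMap F[X] (FractionRing F[X])
  have hφ : Function.Injective φ := IsFractionRing.injective F[X] (FractionRing F[X])
  have hd : ∀ k, φ (X - C (e k)) ≠ 0 := fun k => (map_ne_zero_iff φ hφ).2 (X_sub_C_ne_zero _)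
  apply hφ
  rw [charpoly, hchar]
  simp only [map_mul, map_prod, RingHom.map_det, map_sub φ.mapMatrix, map_mul φ.mapMatrix,
    RingHom.mapMatrix_apply, diagonal_map (map_zero φ), map_natCast]
  exact det_diagonal_comp_sub_submatrix hd ((Q.map C).map φ) f

theorem charpoly_diagonal_comp_add_submatrix_of_fin_two (e : Fin 2 → F)
    (Q : Matrix (Fin 2) (Fin 2) F) (f : ι → Fin 2) {s t : ℕ} (hs : #{i | f i = 0} = s + 1)
    (ht : #{i | f i = 1} = t + 1) :
    (diagonal (e ∘ f) + Q.submatrix f f).charpoly =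
      (X - C (e 0)) ^ s * (X - C (e 1)) ^ t *
        ((X - C (e 0 + (s + 1) * Q 0 0)) * (X - C (e 1 + (t + 1) * Q 1 1)) -
          C ((s + 1) * (t + 1) * Q 0 1 * Q 1 0)) := by
  have h := charpoly_diagonal_comp_add_submatrix_mul_prod e Q f
  rw [← prod_fiberwise' univ f fun k => X - C (e k), Fin.prod_univ_two, Fin.prod_univ_two,
    prod_const, prod_const, hs, ht, det_fin_two] at h
  refine mul_right_cancel₀ (mul_ne_zero (X_sub_C_ne_zero (e 0)) (X_sub_C_ne_zero (e 1))) ?_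
  rw [h]
  simp only [sub_apply, diagonal_apply_eq, diagonal_apply_ne, diagonal_mul, map_apply, hs, ht,
    zero_ne_one, one_ne_zero, ne_eq, not_false_eq_true, zero_sub, mul_neg, neg_mul, neg_neg,
    Nat.cast_add, Nat.cast_one, map_add, map_mul, map_natCast, map_one]
  ring

end Field

theorem of_ite_eq_diagonal_add_submatrix {R : Type*} [Ring R] [DecidableEq ι] (p : ι → Prop)
    [DecidablePred p] (f : ι → Fin 2) (hf : ∀ i, f i = 0 ↔ p i) (a b c : R) :
    (of fun i j => if i = j then 1 else if p i ∧ p j then a else if p i ∨ p j then b else c) =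
      diagonal (![1 - a, 1 - c] ∘ f) + !![a, b; b, c].submatrix f f := by
  have hclass : ∀ i, f i = if p i then 0 else 1 := fun i => by
    split_ifs with hi
    · exact (hf i).2 hi
    · exact Fin.eq_one_of_ne_zero _ fun h => hi ((hf i).1 h)
  ext i j
  rcases eq_or_ne i j with rfl | hij
  · by_cases hi : p i <;> simp [hclass, hi]
  · by_cases hi : p i <;> by_cases hj : p j <;> simp [hclass, hi, hj, hij]

theorem charpoly_of_ite_val_le_one {F : Type*} [Field F] {n : ℕ} (hn : 3 ≤ n) (a b c : F) :
    (of fun i j : Fin n =>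
      if i = j then 1 else if i.val ≤ 1 ∧ j.val ≤ 1 then a
      else if i.val ≤ 1 ∨ j.val ≤ 1 then b else c).charpoly =
      (X - C (1 - a)) * (X - C (1 - c)) ^ (n - 3) *
        ((X - C (1 + a)) * (X - C (1 + (n - 3 : ℕ) * c)) - C (2 * (n - 2 : ℕ) * b ^ 2)) := by
  set f : Fin n → Fin 2 := fun i => if (i : ℕ) < 2 then 0 else 1
  have hf : ∀ i, f i = 0 ↔ (i : ℕ) < 2 := fun i => by simp [f]
  have hs : #{i | f i = 0} = 1 + 1 := by
    rw [filter_congr fun i _ => hf i, Fin.card_filter_val_lt]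
    omega
  have ht : #{i | f i = 1} = n - 3 + 1 := by
    rw [filter_congr fun i _ => show f i = 1 ↔ ¬ (i : ℕ) < 2 by simp [f],
      Fin.card_filter_not_val_lt]
    omega
  rw [of_ite_eq_diagonal_add_submatrix _ f (fun i => (hf i).trans Nat.lt_succ_iff),
    charpoly_diagonal_comp_add_submatrix_of_fin_two _ _ f hs ht]
  simp only [cons_val_zero, cons_val_one, of_apply, cons_val', empty_val', cons_val_fin_one,
    Nat.cast_one, pow_one]
  push_cast [show 2 ≤ n by omega, show 3 ≤ n by omega]
  rw [show 1 - a + (1 + 1) * a = 1 + a by ring,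
    show 1 - c + (n - 3 + 1) * c = 1 + (n - 3) * c by ring,
    show (1 + 1) * ((n : F) - 3 + 1) * b * b = 2 * (n - 2) * b ^ 2 by ring]

end Matrix

theorem stmt10 {n : ℕ} (hn : 4 ≤ n)
    (M : Matrix (Fin n) (Fin n) ℝ)
    (hM : M = Matrix.of fun i j =>
      if i = j then (1 : ℝ)
      else if i.val ≤ 1 ∧ j.val ≤ 1 then -2 / (n : ℝ)
      else if i.val ≤ 1 ∨ j.val ≤ 1 then -1 / Real.sqrt ((n : ℝ) * ((n : ℝ) - 1))
      else -1 / ((n : ℝ) - 1)) :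
    M.charpoly = X
      * (X - C (((n : ℝ) ^ 2 - n + 2) / ((n : ℝ) * ((n : ℝ) - 1))))
      * (X - C ((n : ℝ) / ((n : ℝ) - 1))) ^ (n - 3)
      * (X - C (((n : ℝ) + 2) / (n : ℝ))) := by
  have hn4 : (4 : ℝ) ≤ n := by exact_mod_cast hn
  have hn0 : (n : ℝ) ≠ 0 := by positivity
  have hn1 : (n : ℝ) - 1 ≠ 0 := by linarith
  have hν : 1 - -2 / (n : ℝ) = (n + 2) / n := by field_simp; ring
  have hμ : 1 - -1 / ((n : ℝ) - 1) = n / (n - 1) := by field_simp; ring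
  have hp : 1 + -2 / (n : ℝ) = (n - 2) / n := by field_simp; ring
  have hq : 1 + (n - 3 : ℕ) * (-1 / ((n : ℝ) - 1)) = 2 / (n - 1) := by
    push_cast [show 3 ≤ n by omega]
    field_simp
    ring
  have hr : 2 * (n - 2 : ℕ) * (-1 / Real.sqrt ((n : ℝ) * (n - 1))) ^ 2 =
      (n - 2) / n * (2 / (n - 1)) := by
    rw [div_pow, Real.sq_sqrt (by nlinarith)]
    push_cast [show 2 ≤ n by omega]
    field_simp
  have hsum : ((n : ℝ) ^ 2 - n + 2) / (n * (n - 1)) = (n - 2) / n + 2 / (n - 1) := by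
    field_simp
    ring
  rw [hM, charpoly_of_ite_val_le_one (by omega), hν, hμ, hp, hq, hr, hsum]
  simp only [map_add, map_mul]
  ring
end

section
/- If two connected graphs G and H on the same number of vertices satisfy φ^D(λ,r,G) = φ^D(λ,r,H) identically, then G and H are cospectral with respect to the distance matrix, the distance Laplacian, the signless distance Laplacian, and the normalized distance Laplacian, and they have the same multiset of vertex transmissions. -/
/-!
Every charpoly in the statement is a specialization of `φ(λ, r) = det (λ I - D + r T)`:
for `b ≠ 0`, `det (x I - (a T + b D)) = bⁿ φ(x / b, -a / b)`, which covers `D`, `T - D` and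
`T + D`. The transmissions are the roots of the charpoly of `T`, and `det (x I - T)` is the
leading coefficient of the polynomial `r ↦ det (r (x I - T) - D) = φ(r x, -r)`. Finally, for
`S = T^{-1/2}` we have `S T S = I`, so `det (x I - S (T - D) S) = (det T)⁻¹ det (x T - T + D)`,
which is `±(det T)⁻¹ φ(0, 1 - x)`.
-/

open Matrix Polynomial

section GenCharDet

variable {ι K : Type*} [Fintype ι] [DecidableEq ι] [Field K]

/-- `φ^D(λ, r)` of the paper, for `D` the distance matrix and `t` the transmissions. -/
def genCharDet (D : Matrix ι ι K) (t : ι → K) (lam r : K) : K :=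
  (lam • (1 : Matrix ι ι K) - D + r • diagonal t).det

lemma eval_charpoly_smul_diagonal_add_smul (D : Matrix ι ι K) (t : ι → K) (a : K) {b : K}
    (hb : b ≠ 0) (x : K) :
    (a • diagonal t + b • D).charpoly.eval x =
      b ^ Fintype.card ι * genCharDet D t (x / b) (-a / b) := by
  have : scalar ι x - (a • diagonal t + b • D) =
      b • ((x / b) • 1 - D + (-a / b) • diagonal t) := by
    rw [scalar_apply, ← smul_one_eq_diagonal, smul_add, smul_sub, smul_smul, smul_smul,
      mul_div_cancel₀ _ hb, mul_div_cancel₀ _ hb, neg_smul]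
    abel
  rw [eval_charpoly, this, det_smul, genCharDet]

lemma charpoly_smul_diagonal_add_smul_eq [Infinite K] {D D' : Matrix ι ι K} {t t' : ι → K}
    (h : ∀ lam r, genCharDet D t lam r = genCharDet D' t' lam r) (a : K) {b : K} (hb : b ≠ 0) :
    (a • diagonal t + b • D).charpoly = (a • diagonal t' + b • D').charpoly :=
  Polynomial.funext fun x => by
    rw [eval_charpoly_smul_diagonal_add_smul _ _ _ hb,
      eval_charpoly_smul_diagonal_add_smul _ _ _ hb, h]

lemma eval_det_X_smul_add (A B : Matrix ι ι K) (r : K) :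
    (det ((X : K[X]) • A.map C + B.map C)).eval r = det (r • A + B) := by
  rw [← coe_evalRingHom, RingHom.map_det]
  congr 1
  ext i j
  simp [mul_comm (A i j)]

lemma det_smul_scalar_sub_diagonal_sub (D : Matrix ι ι K) (t : ι → K) (x r : K) :
    det (r • (scalar ι x - diagonal t) + -D) = genCharDet D t (r * x) (-r) := by
  rw [genCharDet, scalar_apply, ← smul_one_eq_diagonal, smul_sub, smul_smul, neg_smul]
  abel_nf

lemma charpoly_diagonal_eq [Infinite K] {D D' : Matrix ι ι K} {t t' : ι → K}
    (h : ∀ lam r, genCharDet D t lam r = genCharDet D' t' lam r) :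
    (diagonal t).charpoly = (diagonal t').charpoly := by
  refine Polynomial.funext fun x => ?_
  have : det ((X : K[X]) • (scalar ι x - diagonal t).map C + (-D).map C) =
      det ((X : K[X]) • (scalar ι x - diagonal t').map C + (-D').map C) :=
    Polynomial.funext fun r => by
      rw [eval_det_X_smul_add, eval_det_X_smul_add, det_smul_scalar_sub_diagonal_sub,
        det_smul_scalar_sub_diagonal_sub, h]
  rw [eval_charpoly, eval_charpoly, ← coeff_det_X_add_C_card _ (-D),
    ← coeff_det_X_add_C_card _ (-D'), this]

lemma roots_charpoly_diagonal (t : ι → K) :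
    (diagonal t).charpoly.roots = Finset.univ.val.map t := by
  rw [charpoly_diagonal, ← roots_multiset_prod_X_sub_C (Finset.univ.val.map t), Multiset.map_map]
  rfl

lemma eval_charpoly_diagonal_mul_sub_mul_diagonal (D : Matrix ι ι K) {s t : ι → K}
    (hst : ∀ i, s i ^ 2 * t i = 1) (x : K) :
    (diagonal s * (diagonal t - D) * diagonal s).charpoly.eval x =
      (-1) ^ Fintype.card ι * (∏ i, t i)⁻¹ * genCharDet D t 0 (1 - x) := by
  have hsts : diagonal s * diagonal t * diagonal s = 1 := by
    simp only [diagonal_mul_diagonal, ← diagonal_one]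
    exact congrArg diagonal (funext fun i => by rw [← hst i]; ring)
  have hdet : (diagonal s).det * (diagonal s).det = (∏ i, t i)⁻¹ := by
    refine eq_inv_of_mul_eq_one_left ?_
    rw [det_diagonal, ← Finset.prod_mul_distrib, ← Finset.prod_mul_distrib]
    exact Finset.prod_eq_one fun i _ => by rw [← hst i]; ring
  have : scalar ι x - diagonal s * (diagonal t - D) * diagonal s =
      diagonal s * -((0 : K) • 1 - D + (1 - x) • diagonal t) * diagonal s := by
    rw [scalar_apply, ← smul_one_eq_diagonal, ← hsts]
    simp only [mul_sub, sub_mul, mul_neg, neg_mul, mul_add, add_mul, Matrix.mul_smul,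
      Matrix.smul_mul, zero_smul, sub_smul, one_smul, mul_zero, zero_mul]
    abel
  rw [eval_charpoly, this, det_mul, det_mul, det_neg, ← hdet, genCharDet]
  ring

lemma charpoly_diagonal_mul_sub_mul_diagonal_eq [Infinite K] {D D' : Matrix ι ι K}
    {t t' s s' : ι → K} (h : ∀ lam r, genCharDet D t lam r = genCharDet D' t' lam r)
    (hst : ∀ i, s i ^ 2 * t i = 1) (hst' : ∀ i, s' i ^ 2 * t' i = 1) :
    (diagonal s * (diagonal t - D) * diagonal s).charpoly =
      (diagonal s' * (diagonal t' - D') * diagonal s').charpoly := by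
  have hprod : ∏ i, t i = ∏ i, t' i := by
    rw [← det_diagonal, ← det_diagonal, det_eq_sign_charpoly_coeff, det_eq_sign_charpoly_coeff,
      charpoly_diagonal_eq h]
  exact Polynomial.funext fun x => by
    rw [eval_charpoly_diagonal_mul_sub_mul_diagonal _ hst,
      eval_charpoly_diagonal_mul_sub_mul_diagonal _ hst', hprod, h]

end GenCharDet

lemma SimpleGraph.Connected.sum_dist_pos {V : Type*} [Fintype V] [Nontrivial V]
    {G : SimpleGraph V} (hG : G.Connected) (i : V) : 0 < ∑ j, (G.dist i j : ℝ) := by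
  obtain ⟨j, hj⟩ := exists_ne i
  exact Finset.sum_pos' (fun _ _ => by positivity)
    ⟨j, Finset.mem_univ j, by exact_mod_cast hG.pos_dist_of_ne hj.symm⟩

lemma one_div_sqrt_sq_mul_self {a : ℝ} (ha : 0 < a) : (1 / √a) ^ 2 * a = 1 := by
  rw [div_pow, Real.sq_sqrt ha.le]
  field_simp

theorem stmt13 {n : ℕ} (G H : SimpleGraph (Fin n)) (hGc : G.Connected) (hHc : H.Connected)
    (DG DH : Matrix (Fin n) (Fin n) ℝ)
    (hDG : DG = Matrix.of fun i j => (G.dist i j : ℝ))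
    (hDH : DH = Matrix.of fun i j => (H.dist i j : ℝ))
    (tG tH : Fin n → ℝ)
    (htG : tG = fun i => ∑ j, (G.dist i j : ℝ))
    (htH : tH = fun i => ∑ j, (H.dist i j : ℝ))
    (h : ∀ lam r : ℝ,
      (lam • (1 : Matrix (Fin n) (Fin n) ℝ) - DG + r • Matrix.diagonal tG).det
        = (lam • (1 : Matrix (Fin n) (Fin n) ℝ) - DH + r • Matrix.diagonal tH).det) :
    DG.charpoly = DH.charpoly ∧
    (Matrix.diagonal tG - DG).charpoly = (Matrix.diagonal tH - DH).charpoly ∧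
    (Matrix.diagonal tG + DG).charpoly = (Matrix.diagonal tH + DH).charpoly ∧
    ((Matrix.diagonal fun i => 1 / Real.sqrt (tG i)) * (Matrix.diagonal tG - DG) *
        (Matrix.diagonal fun i => 1 / Real.sqrt (tG i))).charpoly
      = ((Matrix.diagonal fun i => 1 / Real.sqrt (tH i)) * (Matrix.diagonal tH - DH) *
        (Matrix.diagonal fun i => 1 / Real.sqrt (tH i))).charpoly ∧
    Finset.univ.val.map tG = Finset.univ.val.map tH := by
  have h : ∀ lam r, genCharDet DG tG lam r = genCharDet DH tH lam r := h
  refine ⟨by simpa using charpoly_smul_diagonal_add_smul_eq h 0 one_ne_zero,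
    by simpa [← sub_eq_add_neg] using
      charpoly_smul_diagonal_add_smul_eq h 1 (neg_ne_zero.2 one_ne_zero),
    by simpa using charpoly_smul_diagonal_add_smul_eq h 1 one_ne_zero, ?_,
    by rw [← roots_charpoly_diagonal, ← roots_charpoly_diagonal, charpoly_diagonal_eq h]⟩
  subst hDG hDH htG htH
  rcases subsingleton_or_nontrivial (Fin n) with hn | hn
  · obtain rfl : G = H := (SimpleGraph.subsingleton_iff.mpr hn).elim G H
    rfl
  · exact charpoly_diagonal_mul_sub_mul_diagonal_eq h
      (fun i => one_div_sqrt_sq_mul_self (hGc.sum_dist_pos i))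
      (fun i => one_div_sqrt_sq_mul_self (hHc.sum_dist_pos i))
end

section
/- For any connected graph G, the normalized distance Laplacian eigenvalues satisfy (1/t_max)·∂^L_i ≤ ∂^L_norm_i ≤ (1/t_min)·∂^L_i for each i, where ∂^L_i are the distance Laplacian eigenvalues (both listed in increasing order), t_max is the maximum vertex transmission and t_min is the minimum vertex transmission. -/
/-!
Write `L` for the distance Laplacian and `W = diagonal (1 / √t)`, so that the normalized matrix
is `Wᵀ L W` and `x ⬝ᵥ Wᵀ L W x = (W x) ⬝ᵥ L (W x)`, while `|x|²/tmax ≤ |W x|² ≤ |x|²/tmin`.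
Diagonalise both matrices by orthogonal matrices with the eigenvalues in increasing order. Since
only `n - 1` linear conditions are imposed, some `x ≠ 0` has the coordinates of `x` in the
eigenbasis of `Wᵀ L W` vanishing below `i` and those of `W x` in the eigenbasis of `L` vanishing
above `i` (Courant–Fischer); then `ν i |x|² ≤ x ⬝ᵥ Wᵀ L W x ≤ μ i |W x|² ≤ μ i |x|²/tmin`,
and symmetrically for the lower bound. The sign `μ i ≥ 0` needed here comes from
`2 x ⬝ᵥ L x = ∑ i j, dist i j * (x i - x j)²`.
-/

open Matrix Polynomial

theorem Fin.eq_of_monotone_of_map_univ_eq {α : Type*} [LinearOrder α] {n : ℕ}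
    {f g : Fin n → α} (hf : Monotone f) (hg : Monotone g)
    (h : Finset.univ.val.map f = Finset.univ.val.map g) : f = g := by
  rw [Fin.univ_val_map, Fin.univ_val_map, Multiset.coe_eq_coe] at h
  exact List.ofFn_injective (h.eq_of_sortedLE hf.sortedLE_ofFn hg.sortedLE_ofFn)

namespace Matrix

variable {n : ℕ}

theorem IsHermitian.exists_orthogonal_eq_mul_diagonal_mul {A : Matrix (Fin n) (Fin n) ℝ}
    (hA : A.IsHermitian) {μ : Fin n → ℝ} (hμ : Monotone μ)
    (hc : A.charpoly = ∏ i, (X - C (μ i))) :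
    ∃ P : Matrix (Fin n) (Fin n) ℝ, P * Pᵀ = 1 ∧ A = P * diagonal μ * Pᵀ := by
  set U : Matrix (Fin n) (Fin n) ℝ := ↑hA.eigenvectorUnitary
  set σ := Tuple.sort hA.eigenvalues
  have hU : U * Uᵀ = 1 := Matrix.mem_unitaryGroup_iff.mp hA.eigenvectorUnitary.2
  have hAU : A = U * diagonal hA.eigenvalues * Uᵀ := by
    simpa [Unitary.conjStarAlgAut_apply, U, star_eq_conjTranspose] using hA.spectral_theorem
  have hμσ : μ = hA.eigenvalues ∘ σ := by
    refine Fin.eq_of_monotone_of_map_univ_eq hμ (Tuple.monotone_sort _) ?_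
    have := hA.roots_charpoly_eq_eigenvalues
    rw [hc, Polynomial.roots_prod _ _ (by simp [Finset.prod_ne_zero_iff, X_sub_C_ne_zero])] at this
    rw [← Multiset.map_map, Multiset.map_univ_val_equiv]
    simpa using this
  refine ⟨U.submatrix id σ, ?_, ?_⟩
  · rw [transpose_submatrix, submatrix_mul_equiv U Uᵀ id σ id, hU, submatrix_id_id]
  · rw [hμσ, ← submatrix_diagonal_equiv, transpose_submatrix, submatrix_mul_equiv _ _ id σ σ,
      submatrix_mul_equiv _ _ id σ id, submatrix_id_id, ← hAU]

theorem exists_ne_zero_mulVec_eq_zero_of_lt_of_gt {K : Type*} [Field K]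
    (R₁ R₂ : Matrix (Fin n) (Fin n) K) (i : Fin n) :
    ∃ x ≠ 0, (∀ j < i, (R₁ *ᵥ x) j = 0) ∧ ∀ j, i < j → (R₂ *ᵥ x) j = 0 := by
  let M : Matrix (Fin n) (Fin n) K :=
    of fun j k => if j < i then R₁ j k else if i < j then R₂ j k else 0
  have hM : M.det = 0 := det_eq_zero_of_row_eq_zero i fun k => by simp [M]
  obtain ⟨x, hx, hMx⟩ := exists_mulVec_eq_zero_iff.mpr hM
  refine ⟨x, hx, fun j hj => ?_, fun j hj => ?_⟩
  · simpa [M, mulVec, dotProduct, hj] using congrFun hMx j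
  · simpa [M, mulVec, dotProduct, hj, lt_asymm hj] using congrFun hMx j

theorem dotProduct_mulVec_mul_diagonal_mul_transpose (P : Matrix (Fin n) (Fin n) ℝ)
    (μ x : Fin n → ℝ) :
    x ⬝ᵥ ((P * diagonal μ * Pᵀ) *ᵥ x) = ∑ j, μ j * (Pᵀ *ᵥ x) j ^ 2 := by
  rw [← mulVec_mulVec, ← mulVec_mulVec, dotProduct_mulVec, ← mulVec_transpose]
  simp only [dotProduct, mulVec_diagonal, sq, mul_left_comm]

theorem dotProduct_transpose_mulVec_self {P : Matrix (Fin n) (Fin n) ℝ} (hP : P * Pᵀ = 1)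
    (x : Fin n → ℝ) : (Pᵀ *ᵥ x) ⬝ᵥ (Pᵀ *ᵥ x) = x ⬝ᵥ x := by
  rw [dotProduct_mulVec, ← mulVec_transpose, transpose_transpose, mulVec_mulVec, hP, one_mulVec]

theorem dotProduct_mulVec_le_of_forall_gt {P : Matrix (Fin n) (Fin n) ℝ} (hP : P * Pᵀ = 1)
    {μ : Fin n → ℝ} (hμ : Monotone μ) {i : Fin n} {x : Fin n → ℝ}
    (hx : ∀ j, i < j → (Pᵀ *ᵥ x) j = 0) :
    x ⬝ᵥ ((P * diagonal μ * Pᵀ) *ᵥ x) ≤ μ i * (x ⬝ᵥ x) := by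
  rw [dotProduct_mulVec_mul_diagonal_mul_transpose, ← dotProduct_transpose_mulVec_self hP,
    dotProduct, Finset.mul_sum]
  refine Finset.sum_le_sum fun j _ => ?_
  rcases le_or_gt j i with hj | hj
  · rw [← sq]
    exact mul_le_mul_of_nonneg_right (hμ hj) (sq_nonneg _)
  · simp [hx j hj]

theorem le_dotProduct_mulVec_of_forall_lt {P : Matrix (Fin n) (Fin n) ℝ} (hP : P * Pᵀ = 1)
    {μ : Fin n → ℝ} (hμ : Monotone μ) {i : Fin n} {x : Fin n → ℝ}
    (hx : ∀ j < i, (Pᵀ *ᵥ x) j = 0) :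
    μ i * (x ⬝ᵥ x) ≤ x ⬝ᵥ ((P * diagonal μ * Pᵀ) *ᵥ x) := by
  rw [dotProduct_mulVec_mul_diagonal_mul_transpose, ← dotProduct_transpose_mulVec_self hP,
    dotProduct, Finset.mul_sum]
  refine Finset.sum_le_sum fun j _ => ?_
  rcases lt_or_ge j i with hj | hj
  · simp [hx j hj]
  · rw [← sq]
    exact mul_le_mul_of_nonneg_right (hμ hj) (sq_nonneg _)

theorem nonneg_of_forall_dotProduct_mulVec_nonneg {P : Matrix (Fin n) (Fin n) ℝ}
    (hP : P * Pᵀ = 1) {μ : Fin n → ℝ}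
    (h : ∀ x, 0 ≤ x ⬝ᵥ ((P * diagonal μ * Pᵀ) *ᵥ x)) (i : Fin n) : 0 ≤ μ i := by
  have hPP : Pᵀ * P = 1 := mul_eq_one_comm.mp hP
  have hx : Pᵀ *ᵥ (P *ᵥ Pi.single i 1) = Pi.single i 1 := by
    rw [mulVec_mulVec, hPP, one_mulVec]
  have h₀ := h (P *ᵥ Pi.single i 1)
  rw [dotProduct_mulVec_mul_diagonal_mul_transpose, hx] at h₀
  simpa [Pi.single_apply] using h₀

theorem dotProduct_transpose_mul_mul_mulVec {ι : Type*} [Fintype ι]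
    (A S : Matrix ι ι ℝ) (x : ι → ℝ) : x ⬝ᵥ ((Sᵀ * A * S) *ᵥ x) = (S *ᵥ x) ⬝ᵥ (A *ᵥ (S *ᵥ x)) := by
  rw [← mulVec_mulVec, ← mulVec_mulVec, dotProduct_mulVec, ← mulVec_transpose,
    transpose_transpose]

section Congruence

variable {A B S : Matrix (Fin n) (Fin n) ℝ} {μ ν : Fin n → ℝ} {c : ℝ} {i : Fin n}

theorem le_mul_of_eq_transpose_mul_mul (hA : A.IsHermitian) (hB : B.IsHermitian)
    (hμ : Monotone μ) (hν : Monotone ν) (hcA : A.charpoly = ∏ i, (X - C (μ i)))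
    (hcB : B.charpoly = ∏ i, (X - C (ν i))) (hBA : B = Sᵀ * A * S) (hμi : 0 ≤ μ i)
    (hS : ∀ x, (S *ᵥ x) ⬝ᵥ (S *ᵥ x) ≤ c * (x ⬝ᵥ x)) :
    ν i ≤ c * μ i := by
  obtain ⟨P, hP, rfl⟩ := hA.exists_orthogonal_eq_mul_diagonal_mul hμ hcA
  obtain ⟨Q, hQ, rfl⟩ := hB.exists_orthogonal_eq_mul_diagonal_mul hν hcB
  obtain ⟨x, hx, hxQ, hxP⟩ := exists_ne_zero_mulVec_eq_zero_of_lt_of_gt Qᵀ (Pᵀ * S) i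
  rw [← mulVec_mulVec] at hxP
  refine le_of_mul_le_mul_right ?_ (by simpa using dotProduct_self_star_pos_iff.mpr hx)
  calc ν i * (x ⬝ᵥ x) ≤ x ⬝ᵥ ((Q * diagonal ν * Qᵀ) *ᵥ x) :=
        le_dotProduct_mulVec_of_forall_lt hQ hν hxQ
    _ ≤ μ i * ((S *ᵥ x) ⬝ᵥ (S *ᵥ x)) := by
        rw [hBA, dotProduct_transpose_mul_mul_mulVec]
        exact dotProduct_mulVec_le_of_forall_gt hP hμ hxP
    _ ≤ μ i * (c * (x ⬝ᵥ x)) := mul_le_mul_of_nonneg_left (hS x) hμi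
    _ = c * μ i * (x ⬝ᵥ x) := by ring

theorem mul_le_of_eq_transpose_mul_mul (hA : A.IsHermitian) (hB : B.IsHermitian)
    (hμ : Monotone μ) (hν : Monotone ν) (hcA : A.charpoly = ∏ i, (X - C (μ i)))
    (hcB : B.charpoly = ∏ i, (X - C (ν i))) (hBA : B = Sᵀ * A * S) (hμi : 0 ≤ μ i)
    (hS : ∀ x, c * (x ⬝ᵥ x) ≤ (S *ᵥ x) ⬝ᵥ (S *ᵥ x)) :
    c * μ i ≤ ν i := by
  obtain ⟨P, hP, rfl⟩ := hA.exists_orthogonal_eq_mul_diagonal_mul hμ hcA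
  obtain ⟨Q, hQ, rfl⟩ := hB.exists_orthogonal_eq_mul_diagonal_mul hν hcB
  obtain ⟨x, hx, hxP, hxQ⟩ := exists_ne_zero_mulVec_eq_zero_of_lt_of_gt (Pᵀ * S) Qᵀ i
  rw [← mulVec_mulVec] at hxP
  refine le_of_mul_le_mul_right ?_ (by simpa using dotProduct_self_star_pos_iff.mpr hx)
  calc c * μ i * (x ⬝ᵥ x) = μ i * (c * (x ⬝ᵥ x)) := by ring
    _ ≤ μ i * ((S *ᵥ x) ⬝ᵥ (S *ᵥ x)) := mul_le_mul_of_nonneg_left (hS x) hμi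
    _ ≤ x ⬝ᵥ ((Q * diagonal ν * Qᵀ) *ᵥ x) := by
        rw [hBA, dotProduct_transpose_mul_mul_mulVec]
        exact le_dotProduct_mulVec_of_forall_lt hP hμ hxP
    _ ≤ ν i * (x ⬝ᵥ x) := dotProduct_mulVec_le_of_forall_gt hQ hν hxQ

end Congruence

theorem diagonal_mulVec_dotProduct_self_le {ι : Type*} [Fintype ι] [DecidableEq ι]
    {w : ι → ℝ} {c : ℝ} (hw : ∀ j, w j ^ 2 ≤ c) (x : ι → ℝ) :
    (diagonal w *ᵥ x) ⬝ᵥ (diagonal w *ᵥ x) ≤ c * (x ⬝ᵥ x) := by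
  simp only [dotProduct, mulVec_diagonal, Finset.mul_sum]
  exact Finset.sum_le_sum fun j _ => by nlinarith [hw j, mul_self_nonneg (x j)]

theorem le_diagonal_mulVec_dotProduct_self {ι : Type*} [Fintype ι] [DecidableEq ι]
    {w : ι → ℝ} {c : ℝ} (hw : ∀ j, c ≤ w j ^ 2) (x : ι → ℝ) :
    c * (x ⬝ᵥ x) ≤ (diagonal w *ᵥ x) ⬝ᵥ (diagonal w *ᵥ x) := by
  simp only [dotProduct, mulVec_diagonal, Finset.mul_sum]
  exact Finset.sum_le_sum fun j _ => by nlinarith [hw j, mul_self_nonneg (x j)]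

theorem two_mul_dotProduct_diagonal_sum_sub_mulVec {ι : Type*} [Fintype ι] [DecidableEq ι]
    {d : Matrix ι ι ℝ} (hd : d.IsSymm) (x : ι → ℝ) :
    2 * (x ⬝ᵥ ((diagonal (fun i => ∑ j, d i j) - d) *ᵥ x)) =
      ∑ i, ∑ j, d i j * (x i - x j) ^ 2 := by
  have hswap : ∑ i, ∑ j, d i j * (x j ^ 2 - x j * x i) =
      ∑ i, ∑ j, d i j * (x i ^ 2 - x i * x j) := by
    rw [Finset.sum_comm]
    exact Finset.sum_congr rfl fun i _ => Finset.sum_congr rfl fun j _ => by rw [hd.apply]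
  calc 2 * (x ⬝ᵥ ((diagonal (fun i => ∑ j, d i j) - d) *ᵥ x))
      = 2 * ∑ i, ∑ j, d i j * (x i ^ 2 - x i * x j) := by
        simp only [dotProduct, sub_mulVec, Pi.sub_apply, mulVec_diagonal]
        simp only [mulVec, dotProduct, Finset.sum_mul, Finset.mul_sum, ← Finset.sum_sub_distrib]
        exact Finset.sum_congr rfl fun i _ => Finset.sum_congr rfl fun j _ => by ring
    _ = ∑ i, ∑ j, d i j * (x i - x j) ^ 2 := by
        rw [two_mul]
        nth_rewrite 2 [← hswap]
        simp only [← Finset.sum_add_distrib]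
        exact Finset.sum_congr rfl fun i _ => Finset.sum_congr rfl fun j _ => by ring

theorem dotProduct_diagonal_sum_sub_mulVec_nonneg {ι : Type*} [Fintype ι] [DecidableEq ι]
    {d : Matrix ι ι ℝ} (hd : d.IsSymm) (hd₀ : ∀ i j, 0 ≤ d i j) (x : ι → ℝ) :
    0 ≤ x ⬝ᵥ ((diagonal (fun i => ∑ j, d i j) - d) *ᵥ x) := by
  have h := two_mul_dotProduct_diagonal_sum_sub_mulVec hd x
  have hsum : 0 ≤ ∑ i, ∑ j, d i j * (x i - x j) ^ 2 :=
    Finset.sum_nonneg fun i _ => Finset.sum_nonneg fun j _ => mul_nonneg (hd₀ i j) (sq_nonneg _)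
  linarith

end Matrix

theorem stmt15_general {n : ℕ} (G : SimpleGraph (Fin n))
    (t : Fin n → ℝ) (ht : t = fun i => ∑ j, (G.dist i j : ℝ))
    (tmax tmin : ℝ)
    (hmax : (∀ i, t i ≤ tmax) ∧ ∃ i, t i = tmax)
    (hmin : (∀ i, tmin ≤ t i) ∧ ∃ i, t i = tmin)
    (htmin : 0 < tmin)
    (DL DLn : Matrix (Fin n) (Fin n) ℝ)
    (hDL : DL = Matrix.diagonal t - Matrix.of fun i j => (G.dist i j : ℝ))
    (hDLn : DLn = (Matrix.diagonal fun i => 1 / Real.sqrt (t i)) * DL *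
        (Matrix.diagonal fun i => 1 / Real.sqrt (t i)))
    (μ ν : Fin n → ℝ) (hμ : Monotone μ) (hν : Monotone ν)
    (hcμ : DL.charpoly = ∏ i, (X - C (μ i)))
    (hcν : DLn.charpoly = ∏ i, (X - C (ν i))) :
    ∀ i, (1 / tmax) * μ i ≤ ν i ∧ ν i ≤ (1 / tmin) * μ i := by
  intro i
  set w : Fin n → ℝ := fun i => 1 / Real.sqrt (t i)
  have ht_pos : ∀ j, 0 < t j := fun j => htmin.trans_le (hmin.1 j)
  have hw : ∀ j, w j ^ 2 = 1 / t j := fun j => by simp [w, Real.sq_sqrt (ht_pos j).le]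
  have hdist : (of fun i j => (G.dist i j : ℝ)).IsSymm :=
    IsSymm.ext fun i j => by simp [SimpleGraph.dist_comm]
  have hDL_symm : DL.IsHermitian := by
    simpa [hDL] using (isSymm_diagonal t).sub hdist
  have hDLn_eq : DLn = (diagonal w)ᵀ * DL * diagonal w := by rw [diagonal_transpose, hDLn]
  have hDLn_symm : DLn.IsHermitian := by
    rw [hDLn_eq, ← conjTranspose_eq_transpose_of_trivial]
    exact isHermitian_conjTranspose_mul_mul _ hDL_symm
  have hμi : 0 ≤ μ i := by
    obtain ⟨P, hP, hDLP⟩ := hDL_symm.exists_orthogonal_eq_mul_diagonal_mul hμ hcμ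
    refine nonneg_of_forall_dotProduct_mulVec_nonneg hP (fun x => ?_) i
    rw [← hDLP, hDL, ht]
    exact dotProduct_diagonal_sum_sub_mulVec_nonneg hdist (fun _ _ => Nat.cast_nonneg _) x
  have hw_ge : ∀ j, 1 / tmax ≤ w j ^ 2 := fun j =>
    hw j ▸ one_div_le_one_div_of_le (ht_pos j) (hmax.1 j)
  have hw_le : ∀ j, w j ^ 2 ≤ 1 / tmin := fun j =>
    hw j ▸ one_div_le_one_div_of_le htmin (hmin.1 j)
  exact ⟨mul_le_of_eq_transpose_mul_mul hDL_symm hDLn_symm hμ hν hcμ hcν hDLn_eq hμi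
      (le_diagonal_mulVec_dotProduct_self hw_ge),
    le_mul_of_eq_transpose_mul_mul hDL_symm hDLn_symm hμ hν hcμ hcν hDLn_eq hμi
      (diagonal_mulVec_dotProduct_self_le hw_le)⟩

theorem stmt15 {n : ℕ} (G : SimpleGraph (Fin n)) (hG : G.Connected)
    (t : Fin n → ℝ) (ht : t = fun i => ∑ j, (G.dist i j : ℝ))
    (tmax tmin : ℝ)
    (hmax : (∀ i, t i ≤ tmax) ∧ ∃ i, t i = tmax)
    (hmin : (∀ i, tmin ≤ t i) ∧ ∃ i, t i = tmin)
    (htmin : 0 < tmin)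
    (DL DLn : Matrix (Fin n) (Fin n) ℝ)
    (hDL : DL = Matrix.diagonal t - Matrix.of fun i j => (G.dist i j : ℝ))
    (hDLn : DLn = (Matrix.diagonal fun i => 1 / Real.sqrt (t i)) * DL *
        (Matrix.diagonal fun i => 1 / Real.sqrt (t i)))
    (μ ν : Fin n → ℝ) (hμ : Monotone μ) (hν : Monotone ν)
    (hcμ : DL.charpoly = ∏ i, (X - C (μ i)))
    (hcν : DLn.charpoly = ∏ i, (X - C (ν i))) :
    ∀ i, (1 / tmax) * μ i ≤ ν i ∧ ν i ≤ (1 / tmin) * μ i :=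
  stmt15_general G t ht tmax tmin hmax hmin htmin DL DLn hDL hDLn μ ν hμ hν hcμ hcν
end
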